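/- Let R be a commutative Noetherian local ring and I an ideal of R. Then the nonfree locus of R/I, i.e., the set of primes p such that (R/I)_p is not a free R_p-module, equals V(I + (0 : I)), the set of primes containing I + ann_R(I). -/

import Mathlib

/-!
Localizing `0 → I → R → R/I → 0` at `p` shows `(R/I)_p ≅ R_p / I_p` with `I_p ⊆ R_p`. A cyclic
module `A/J` is free exactly when `J = 0` or `J = A`, since a nonzero free module is faithful
while `J` annihilates `A/J`. Finally `I_p = R_p` iff `p ∉ Supp(R/I) = V(I)`, and `I_p = 0` iff
`p ∉ Supp I = V(0 : I)`, the latter because `I` is finitely generated.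
-/

/-- The nonfree locus of a module: the set of primes `p` such that `M_p` is
not a free `R_p`-module. -/
def nonfreeLocus (R : Type) [CommRing R] (M : Type) [AddCommGroup M]
    [Module R M] : Set (PrimeSpectrum R) :=
  { p | ¬ Module.Free (Localization.AtPrime p.asIdeal)
      (LocalizedModule p.asIdeal.primeCompl M) }

theorem Ideal.free_quotient_iff_eq_bot_or_eq_top {A : Type*} [CommRing A] (J : Ideal A) :
    Module.Free A (A ⧸ J) ↔ J = ⊥ ∨ J = ⊤ := by
  refine ⟨fun _ ↦ or_iff_not_imp_right.mpr fun hJ ↦ ?_, ?_⟩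
  · have : Nontrivial (A ⧸ J) := Submodule.Quotient.nontrivial_iff.mpr hJ
    rw [← (Module.annihilator_eq_bot (M := A ⧸ J)).mpr inferInstance, Ideal.annihilator_quotient]
  · rintro (rfl | rfl)
    · exact Module.Free.of_equiv (Submodule.quotEquivOfEqBot ⊥ rfl).symm
    · have : Subsingleton (A ⧸ (⊤ : Ideal A)) := Submodule.Quotient.subsingleton_iff.mpr rfl
      infer_instance

theorem Module.notMem_support_iff_of_isLocalizedModule {R M M' : Type*} [CommRing R]
    [AddCommGroup M] [Module R M] [AddCommGroup M'] [Module R M'] (p : PrimeSpectrum R)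
    (f : M →ₗ[R] M') [IsLocalizedModule p.asIdeal.primeCompl f] :
    p ∉ Module.support R M ↔ Subsingleton M' :=
  Module.notMem_support_iff.trans (IsLocalizedModule.iso p.asIdeal.primeCompl f).subsingleton_congr

section

variable {R : Type*} [CommRing R] (p : PrimeSpectrum R) (Rₚ : Type*) [CommRing Rₚ]
  [Algebra R Rₚ] [IsLocalization.AtPrime Rₚ p.asIdeal] (I : Ideal R)

theorem Ideal.localized'_atPrime_eq_top_iff :
    I.localized' Rₚ p.asIdeal.primeCompl (Algebra.linearMap R Rₚ) = ⊤ ↔ ¬ I ≤ p.asIdeal := by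
  rw [← Submodule.Quotient.subsingleton_iff, ← Module.notMem_support_iff_of_isLocalizedModule p
    (I.toLocalizedQuotient' Rₚ p.asIdeal.primeCompl (Algebra.linearMap R Rₚ)),
    Module.mem_support_iff_of_finite, Ideal.annihilator_quotient]

theorem Ideal.localized'_atPrime_eq_bot_iff [Module.Finite R I] :
    I.localized' Rₚ p.asIdeal.primeCompl (Algebra.linearMap R Rₚ) = ⊥ ↔
      ¬ I.annihilator ≤ p.asIdeal := by
  rw [← Submodule.subsingleton_iff_eq_bot, ← Module.notMem_support_iff_of_isLocalizedModule p
    (I.toLocalized' Rₚ p.asIdeal.primeCompl (Algebra.linearMap R Rₚ)),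
    Module.mem_support_iff_of_finite]

end

theorem nonfreeLocus_quotient_eq_zeroLocus
    (R : Type) [CommRing R] [IsNoetherianRing R]
    (I : Ideal R) :
    nonfreeLocus R (R ⧸ I) =
      PrimeSpectrum.zeroLocus ((I ⊔ Submodule.annihilator I : Ideal R) : Set R) := by
  ext p
  let Rₚ := Localization.AtPrime p.asIdeal
  have hfree := Module.mem_freeLocus_of_isLocalization p Rₚ _
    (I.toLocalizedQuotient' Rₚ p.asIdeal.primeCompl (Algebra.linearMap R Rₚ))
  rw [nonfreeLocus, Set.mem_ofPred_eq, ← Module.mem_freeLocus, hfree,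
    Ideal.free_quotient_iff_eq_bot_or_eq_top, Ideal.localized'_atPrime_eq_bot_iff,
    Ideal.localized'_atPrime_eq_top_iff, PrimeSpectrum.mem_zeroLocus, SetLike.coe_subset_coe,
    sup_le_iff]
  tauto
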